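/- arXiv:1610.07672 — 2 statements merged into one kernel-verified Lean document; each statement's English description precedes it below -/
import Mathlib

section
/- Let σ² > 0, P_E > 0, ε ∈ (0,1), and suppose c := P_E·ln(1+0.5ε) − σ² with (P_E/σ²)·ln(1+0.5ε) > 0. Then the positive real P_t defined by P_t = σ²·( ((P_E/σ²)·ln(1+0.5ε) − 1) / W[ ((P_E/σ²)·ln(1+0.5ε) − 1)·e^{−1} ] − 1 ), where W is the principal branch of the Lambert W function, satisfies the stationarity equation (P_t + σ²)·ln(P_t + σ²) = (1 + ln σ²)·(P_t + σ²) + P_E·ln(1+0.5ε) − σ². -/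
open Real

/-- Corollary 4: the closed-form optimal transmit power, expressed through the
principal Lambert W value `w` (characterized by `w·e^w = A·e⁻¹`, `w ≥ -1`),
satisfies the stationarity equation. -/
theorem stmt_10 (σ2 PE ε w : ℝ) (hσ2 : 0 < σ2) (hPE : 0 < PE)
    (hε : ε ∈ Set.Ioo (0:ℝ) 1)
    (hpos : 0 < PE / σ2 * Real.log (1 + 0.5 * ε))
    (hw : w * Real.exp w = (PE / σ2 * Real.log (1 + 0.5 * ε) - 1) * Real.exp (-1))
    (hwge : -1 ≤ w) (hw0 : w ≠ 0)
    (Pt : ℝ)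
    (hPt : Pt = σ2 * ((PE / σ2 * Real.log (1 + 0.5 * ε) - 1) / w - 1))
    (hPtpos : 0 < Pt) :
    (Pt + σ2) * Real.log (Pt + σ2) =
      (1 + Real.log σ2) * (Pt + σ2) + PE * Real.log (1 + 0.5 * ε) - σ2 := by
  set A : ℝ := PE / σ2 * Real.log (1 + 0.5 * ε) with hA
  have hA1 : A - 1 = w * Real.exp (w + 1) := by
    have := congrArg (· * Real.exp 1) hw
    rw [mul_assoc, ← Real.exp_add, mul_assoc, ← Real.exp_add] at this
    simpa using this.symm
  have hdiv : (A - 1) / w = Real.exp (w + 1) := by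
    rw [hA1, mul_div_cancel_left₀ _ hw0]
  have hPtσ : Pt + σ2 = σ2 * Real.exp (w + 1) := by
    rw [hPt, hdiv]; ring
  have hlog : Real.log (Pt + σ2) = Real.log σ2 + (w + 1) := by
    rw [hPtσ, Real.log_mul (ne_of_gt hσ2) (ne_of_gt (Real.exp_pos _)), Real.log_exp]
  have hPEA : PE * Real.log (1 + 0.5 * ε) = σ2 * A := by
    rw [hA]; field_simp
  rw [hlog, hPEA]
  have hPtσ' : Pt + σ2 = σ2 * (A - 1) / w := by
    rw [hPtσ, hA1]; field_simp
  rw [hPtσ']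
  field_simp
  ring
end

section
/- For x₁ ≥ 0 and x₂ > 2, the integral identity 2∫_1^∞ (1 − 1/(1 + x₁ r^{−x₂})) r dr = (2x₁/(x₂−2)) · ₂F₁(1, 1 − 2/x₂; 2 − 2/x₂; −x₁) holds, where ₂F₁ is the Gauss hypergeometric function (defined by analytic continuation of its power series to arguments in (−∞, 0]). -/
open MeasureTheory Real

/-- The Gauss hypergeometric function `₂F₁(a,b;c;z)`, defined via the Euler
integral representation (valid for `c > b > 0` and `z ≤ 0`, where it agrees
with the analytic continuation of the power series). -/
noncomputable def gaussHypergeom (a b c z : ℝ) : ℝ :=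
  (Real.Gamma c / (Real.Gamma b * Real.Gamma (c - b))) *
    ∫ t in (0:ℝ)..1, t ^ (b - 1) * (1 - t) ^ (c - b - 1) * (1 - z * t) ^ (-a)

/-- Integral evaluation in Lemma 2:
`2∫₁^∞ (1 - 1/(1 + x₁ r^{-x₂})) r dr = (2x₁/(x₂-2)) ₂F₁(1, 1-2/x₂; 2-2/x₂; -x₁)`. -/
theorem stmt_14 (x₁ x₂ : ℝ) (hx₁ : 0 ≤ x₁) (hx₂ : 2 < x₂) :
    2 * ∫ r in Set.Ioi (1:ℝ), (1 - 1 / (1 + x₁ * r ^ (-x₂))) * r =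
      (2 * x₁ / (x₂ - 2)) * gaussHypergeom 1 (1 - 2 / x₂) (2 - 2 / x₂) (-x₁) := by
  have hx2pos : (0:ℝ) < x₂ := by linarith
  have hx2ne : x₂ ≠ 0 := hx2pos.ne'
  set b : ℝ := 1 - 2 / x₂ with hbdef
  have hbpos : 0 < b := by
    have h1 : 2 / x₂ < 1 := (div_lt_one hx2pos).2 (by linarith)
    simp only [hbdef]; linarith
  set f : ℝ → ℝ := fun t => t ^ (b - 1) * (1 + x₁ * t)⁻¹ with hfdef
  -- Step A: simplify the hypergeometric value
  have hA : gaussHypergeom 1 b (2 - 2/x₂) (-x₁) = b * ∫ t in Set.Ioc (0:ℝ) 1, f t := by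
    unfold gaussHypergeom
    rw [intervalIntegral.integral_of_le zero_le_one]
    congr 1
    · have h1 : (2 - 2/x₂) - b = 1 := by simp only [hbdef]; ring
      have h2 : (2 - 2/x₂) = b + 1 := by simp only [hbdef]; ring
      rw [h1, Real.Gamma_one, mul_one, h2, Real.Gamma_add_one hbpos.ne']
      exact mul_div_cancel_right₀ b (Real.Gamma_pos_of_pos hbpos).ne'
    · refine setIntegral_congr_fun measurableSet_Ioc (fun t ht => ?_)
      have h3 : (2 - 2/x₂) - b - 1 = 0 := by ring
      have h4 : (1 : ℝ) - (-x₁) * t = 1 + x₁ * t := by ring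
      rw [h3, h4, Real.rpow_zero, mul_one]
      simp [hfdef, Real.rpow_neg_one]
  -- Step B: change of variables t = r^{-x₂}
  set g : ℝ → ℝ := (Set.Ioc (0:ℝ) 1).indicator f with hgdef
  have hsub := MeasureTheory.integral_comp_rpow_Ioi g (p := -x₂) (by simpa using hx2ne)
  have hsubR : (∫ y in Set.Ioi (0:ℝ), g y) = ∫ t in Set.Ioc (0:ℝ) 1, f t := by
    rw [hgdef, setIntegral_indicator measurableSet_Ioc,
      Set.inter_eq_self_of_subset_right Set.Ioc_subset_Ioi_self]
  set h : ℝ → ℝ := fun x => x₂ * (x ^ (-x₂-1) * f (x ^ (-x₂))) with hhdef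
  have hsubL : (∫ x in Set.Ioi (0:ℝ), (|(-x₂)| * x ^ (-x₂-1)) • g (x ^ (-x₂)))
      = ∫ x in Set.Ioi (1:ℝ), h x := by
    rw [setIntegral_congr_fun measurableSet_Ioi
      (g := fun x => (Set.Ici (1:ℝ)).indicator h x) ?_]
    · have hset : Set.Ioi (0:ℝ) ∩ Set.Ici 1 = Set.Ici 1 := by
        ext y; simp only [Set.mem_inter_iff, Set.mem_Ioi, Set.mem_Ici, and_iff_right_iff_imp]
        intro hy; linarith
      rw [setIntegral_indicator measurableSet_Ici, hset, integral_Ici_eq_integral_Ioi]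
    · intro x hx
      have hx0 : (0:ℝ) < x := hx
      have habs : |(-x₂)| = x₂ := by rw [abs_neg, abs_of_pos hx2pos]
      have hmem : x ^ (-x₂) ∈ Set.Ioc (0:ℝ) 1 ↔ 1 ≤ x := by
        constructor
        · rintro ⟨-, h1⟩
          rcases (Real.rpow_le_one_iff_of_pos hx0).1 h1 with ⟨h2, -⟩ | ⟨h2, h3⟩
          · exact h2
          · linarith
        · intro h1
          exact ⟨Real.rpow_pos_of_pos hx0 _,
            (Real.rpow_le_one_iff_of_pos hx0).2 (Or.inl ⟨h1, by linarith⟩)⟩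
      dsimp only
      rw [hgdef]
      by_cases hx1 : 1 ≤ x
      · rw [ Set.indicator_of_mem (hmem.2 hx1), Set.indicator_of_mem (Set.mem_Ici.mpr hx1) h,
          smul_eq_mul, habs, hhdef]
        ring
      · rw [Set.indicator_of_notMem (fun hm => hx1 (hmem.1 hm)),
          Set.indicator_of_notMem (fun hm => hx1 (Set.mem_Ici.mp hm)) h, smul_zero]
  -- Step C: pointwise identity on Ioi 1
  have hC : ∀ x ∈ Set.Ioi (1:ℝ), (1 - 1 / (1 + x₁ * x ^ (-x₂))) * x = (x₁/x₂) * h x := by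
    intro x hx
    have hx0 : (0:ℝ) < x := lt_trans one_pos hx
    have hu : (0:ℝ) < 1 + x₁ * x ^ (-x₂) := by positivity
    have e1 : (x ^ (-x₂)) ^ (b - 1) = x ^ (2:ℝ) := by
      rw [← Real.rpow_mul hx0.le]
      congr 1
      field_simp [hbdef]
      have hx : x₂ * (2 / x₂) = 2 := by field_simp
      rw [hbdef]; linear_combination hx
    have e3 : x ^ (-x₂-1) = x ^ (-x₂) / x := by
      rw [show -x₂-1 = -x₂ + (-1) by ring, Real.rpow_add hx0, Real.rpow_neg_one]
      ring
    have e4 : x ^ (2:ℝ) = x * x := by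
      rw [show (2:ℝ) = 1 + 1 by norm_num, Real.rpow_add hx0, Real.rpow_one]
    rw [hhdef]
    simp only [hfdef]
    rw [e1, e3, e4]
    have hune : (1 + x₁ * x ^ (-x₂)) ≠ 0 := hu.ne'
    field_simp
    ring
  -- Assemble
  have hIoi : (∫ r in Set.Ioi (1:ℝ), (1 - 1 / (1 + x₁ * r ^ (-x₂))) * r)
      = (x₁/x₂) * ∫ t in Set.Ioc (0:ℝ) 1, f t := by
    rw [setIntegral_congr_fun measurableSet_Ioi hC, integral_const_mul, ← hsubR, ← hsub, hsubL]
  rw [hIoi, hA]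
  have hne : x₂ - 2 ≠ 0 := by linarith
  field_simp [hbdef]
  have hx : x₂ * (2 / x₂) = 2 := by field_simp
  rw [hbdef]; linear_combination (x₁ * ∫ t in Set.Ioc (0:ℝ) 1, f t) * hx
end
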